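/- Let B', N be real n×n matrices, let M, M', C be real m×m matrices, and let G, G' be real m×n matrices. Assume that (i) B' − 2N is skew-symmetric, (ii) M' − 2C is skew-symmetric, and (iii) M is symmetric. Then the matrix D = (B' + G'ᵀ M G + Gᵀ M' G + Gᵀ M G') − 2(N + Gᵀ M G' + Gᵀ C G) is skew-symmetric, i.e., Dᵀ = −D. -/
import Mathlib


open Matrix

/-- Proposition 1 (second part), algebraic content: if `B' - 2N` and `M' - 2C`
are skew-symmetric and `M` is symmetric, then
`D = (B' + G'ᵀ M G + Gᵀ M' G + Gᵀ M G') - 2 (N + Gᵀ M G' + Gᵀ C G)`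
is skew-symmetric. -/
theorem coupled_coriolis_skew {n m : ℕ}
    (B' N : Matrix (Fin n) (Fin n) ℝ)
    (M M' C : Matrix (Fin m) (Fin m) ℝ)
    (G G' : Matrix (Fin m) (Fin n) ℝ)
    (hBN : (B' - 2 • N)ᵀ = -(B' - 2 • N))
    (hMC : (M' - 2 • C)ᵀ = -(M' - 2 • C))
    (hM : Mᵀ = M) :
    ((B' + G'ᵀ * M * G + Gᵀ * M' * G + Gᵀ * M * G')
      - 2 • (N + Gᵀ * M * G' + Gᵀ * C * G))ᵀ
    = -((B' + G'ᵀ * M * G + Gᵀ * M' * G + Gᵀ * M * G')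
      - 2 • (N + Gᵀ * M * G' + Gᵀ * C * G)) := by
  have hB : B'ᵀ = 2 • Nᵀ - B' + 2 • N := by
    have := hBN
    simp only [transpose_sub, transpose_smul] at this
    linear_combination (norm := abel) this
  have hM' : M'ᵀ = 2 • Cᵀ - M' + 2 • C := by
    have := hMC
    simp only [transpose_sub, transpose_smul] at this
    linear_combination (norm := abel) this
  simp only [transpose_sub, transpose_add, transpose_smul, transpose_mul,
    transpose_transpose, hM, hB, hM', Matrix.mul_add, Matrix.mul_sub,
    Matrix.add_mul, Matrix.sub_mul, Matrix.mul_smul, Matrix.smul_mul, smul_add, smul_sub, Matrix.mul_assoc]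
  abel
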